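/- arXiv:1907.02960 — 7 statements merged into one kernel-verified Lean document; each statement's English description precedes it below -/
import Mathlib

section
/- The ℂ-bilinear bracket on the free ℂ-module with basis {L_m, I_m : m ∈ ℤ} defined on basis elements by [L_m, L_n] = (m−n)(L_{m+n} + I_{m+n}), [L_m, I_n] = −(n+1) I_{m+n}, [I_m, L_n] = (m+1) I_{m+n}, and [I_m, I_n] = 0 is alternating and satisfies the Jacobi identity, i.e., it makes this module into a Lie algebra (the Lie algebra L(𝒩) associated with the 2-dimensional Novikov algebra 𝒩). -/
/-- The free ℂ-module on basis `{L_m, I_m : m ∈ ℤ}`, encoded as `(ℤ × Fin 2) →₀ ℂ`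
where `(m, 0)` stands for `L_m` and `(m, 1)` stands for `I_m`. -/
abbrev NovikovLoop := (ℤ × Fin 2) →₀ ℂ

/-- The bracket on basis elements: `[L_m, L_n] = (m−n)(L_{m+n} + I_{m+n})`,
`[L_m, I_n] = −(n+1) I_{m+n}`, `[I_m, L_n] = (m+1) I_{m+n}`, `[I_m, I_n] = 0`. -/
noncomputable def novikovBasisBracket : ℤ × Fin 2 → ℤ × Fin 2 → NovikovLoop := fun p q =>
  if p.2 = 0 ∧ q.2 = 0 then
    Finsupp.single (p.1 + q.1, (0 : Fin 2)) ((p.1 - q.1 : ℤ) : ℂ)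
      + Finsupp.single (p.1 + q.1, (1 : Fin 2)) ((p.1 - q.1 : ℤ) : ℂ)
  else if p.2 = 0 ∧ q.2 = 1 then
    Finsupp.single (p.1 + q.1, (1 : Fin 2)) (-((q.1 + 1 : ℤ) : ℂ))
  else if p.2 = 1 ∧ q.2 = 0 then
    Finsupp.single (p.1 + q.1, (1 : Fin 2)) ((p.1 + 1 : ℤ) : ℂ)
  else 0

/-- The ℂ-bilinear extension of the bracket on basis elements. -/
noncomputable def novikovBracket (x y : NovikovLoop) : NovikovLoop :=
  x.sum fun p c => y.sum fun q d => (c * d) • novikovBasisBracket p q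

/-! ### Auxiliary lemmas -/

lemma bb_skew (p q : ℤ × Fin 2) : novikovBasisBracket q p = - novikovBasisBracket p q := by
  obtain ⟨m, i⟩ := p; obtain ⟨n, j⟩ := q
  fin_cases i <;> fin_cases j <;>
    simp [novikovBasisBracket, ← Finsupp.single_neg, add_comm, neg_sub]

lemma nb_zero_left (y : NovikovLoop) : novikovBracket 0 y = 0 := by
  simp [novikovBracket]

lemma nb_zero_right (x : NovikovLoop) : novikovBracket x 0 = 0 := by
  simp [novikovBracket]

lemma nb_add_left (x₁ x₂ y : NovikovLoop) :
    novikovBracket (x₁ + x₂) y = novikovBracket x₁ y + novikovBracket x₂ y := by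
  unfold novikovBracket
  rw [Finsupp.sum_add_index] <;> simp [add_mul, add_smul, Finsupp.sum_add]

lemma nb_add_right (x y₁ y₂ : NovikovLoop) :
    novikovBracket x (y₁ + y₂) = novikovBracket x y₁ + novikovBracket x y₂ := by
  unfold novikovBracket
  rw [← Finsupp.sum_add]
  apply Finsupp.sum_congr
  intro p _
  rw [Finsupp.sum_add_index] <;> simp [mul_add, add_smul]

lemma nb_smul_left (s : ℂ) (x y : NovikovLoop) :
    novikovBracket (s • x) y = s • novikovBracket x y := by
  unfold novikovBracket
  rw [Finsupp.sum_smul_index (by simp), Finsupp.smul_sum]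
  apply Finsupp.sum_congr; intro p _
  rw [Finsupp.smul_sum]
  apply Finsupp.sum_congr; intro q _
  rw [smul_smul, mul_assoc]

lemma nb_single (p q : ℤ × Fin 2) (c d : ℂ) :
    novikovBracket (Finsupp.single p c) (Finsupp.single q d)
      = (c * d) • novikovBasisBracket p q := by
  unfold novikovBracket
  rw [Finsupp.sum_single_index (by simp), Finsupp.sum_single_index (by simp)]

lemma nb_skew (x y : NovikovLoop) : novikovBracket y x = - novikovBracket x y := by
  unfold novikovBracket
  rw [Finsupp.sum_comm]
  trans x.sum fun p c => y.sum fun q d => -((c * d) • novikovBasisBracket p q)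
  · apply Finsupp.sum_congr; intro p _; apply Finsupp.sum_congr; intro q _
    rw [bb_skew, mul_comm, smul_neg]
  · simp [Finsupp.sum]

lemma bbLL (m n : ℤ) : novikovBasisBracket (m, 0) (n, 0)
    = Finsupp.single (m + n, (0 : Fin 2)) ((m - n : ℤ) : ℂ)
      + Finsupp.single (m + n, (1 : Fin 2)) ((m - n : ℤ) : ℂ) := by
  simp [novikovBasisBracket]

lemma bbLI (m n : ℤ) : novikovBasisBracket (m, 0) (n, 1)
    = Finsupp.single (m + n, (1 : Fin 2)) (-((n + 1 : ℤ) : ℂ)) := by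
  simp [novikovBasisBracket]

lemma bbIL (m n : ℤ) : novikovBasisBracket (m, 1) (n, 0)
    = Finsupp.single (m + n, (1 : Fin 2)) ((m + 1 : ℤ) : ℂ) := by
  simp [novikovBasisBracket]

lemma bbII (m n : ℤ) : novikovBasisBracket (m, 1) (n, 1) = 0 := by
  simp [novikovBasisBracket]

set_option maxHeartbeats 1000000 in
lemma jacobi_single (p q r : ℤ × Fin 2) (a b c : ℂ) :
    novikovBracket (novikovBracket (Finsupp.single p a) (Finsupp.single q b)) (Finsupp.single r c)
      + novikovBracket (novikovBracket (Finsupp.single q b) (Finsupp.single r c)) (Finsupp.single p a)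
      + novikovBracket (novikovBracket (Finsupp.single r c) (Finsupp.single p a)) (Finsupp.single q b) = 0 := by
  obtain ⟨m, i⟩ := p; obtain ⟨n, j⟩ := q; obtain ⟨k, l⟩ := r
  rw [nb_single, nb_single, nb_single, nb_smul_left, nb_smul_left, nb_smul_left]
  fin_cases i <;> fin_cases j <;> fin_cases l <;>
    simp only [Fin.mk_zero, Fin.mk_one, Fin.isValue, bbLL, bbLI, bbIL, bbII,
      nb_add_left, nb_single, nb_zero_left, smul_zero, add_zero, zero_add, smul_add,
      smul_smul, Finsupp.smul_single, smul_eq_mul, mul_one] <;>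
  · ext w
    obtain ⟨u, s⟩ := w
    fin_cases s <;>
      simp only [Finsupp.coe_add, Pi.add_apply, Finsupp.single_apply, Prod.mk.injEq,
        Fin.isValue, Finsupp.coe_zero, Pi.zero_apply, Fin.zero_eq_one_iff, Fin.one_eq_zero_iff,
        Nat.succ_ne_self, OfNat.ofNat_ne_one, and_true, and_false, if_false, and_self,
        one_ne_zero, ne_eq, Fin.mk_zero, Fin.mk_one] <;>
      (try split_ifs) <;> push_cast <;> first | (exfalso; omega) | ring1

/-- The bilinearly extended bracket is alternating and satisfies the Jacobi identity,
i.e. it makes `NovikovLoop` into a Lie algebra (the Lie algebra `L(𝒩)` associated with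
the 2-dimensional Novikov algebra `𝒩`). -/
theorem novikovBracket_isLieBracket :
    (∀ x : NovikovLoop, novikovBracket x x = 0) ∧
    (∀ x y z : NovikovLoop,
      novikovBracket (novikovBracket x y) z + novikovBracket (novikovBracket y z) x
        + novikovBracket (novikovBracket z x) y = 0) := by
  constructor
  · intro x
    have h := nb_skew x x
    have h2 : novikovBracket x x + novikovBracket x x = 0 := by
      nth_rewrite 1 [h]; simp
    have h3 : (2 : ℂ) • novikovBracket x x = 0 := by
      rw [two_smul]; exact h2
    rcases smul_eq_zero.mp h3 with h4 | h4
    · exact absurd h4 two_ne_zero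
    · exact h4
  · intro x y z
    induction x using Finsupp.induction_linear with
    | zero => simp [nb_zero_left, nb_zero_right]
    | add x₁ x₂ h1 h2 =>
      have h := congrArg₂ HAdd.hAdd h1 h2
      rw [add_zero] at h
      rw [← h]
      simp only [nb_add_left, nb_add_right]
      abel
    | single p a =>
      induction y using Finsupp.induction_linear with
      | zero => simp [nb_zero_left, nb_zero_right]
      | add y₁ y₂ h1 h2 =>
        have h := congrArg₂ HAdd.hAdd h1 h2
        rw [add_zero] at h
        rw [← h]
        simp only [nb_add_left, nb_add_right]
        abel
      | single q b =>
        induction z using Finsupp.induction_linear with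
        | zero => simp [nb_zero_left, nb_zero_right]
        | add z₁ z₂ h1 h2 =>
          have h := congrArg₂ HAdd.hAdd h1 h2
          rw [add_zero] at h
          rw [← h]
          simp only [nb_add_left, nb_add_right]
          abel
        | single r c => exact jacobi_single p q r a b c
end

section
/- Let g ∈ ℂ[∂, λ] be a nonzero polynomial in two variables satisfying the identity g(∂+λ, μ)·g(∂, λ) = g(∂+μ, λ)·g(∂, μ) in ℂ[∂, λ, μ]. Then g has degree 0 in the variable ∂, i.e., g(∂, λ) = g(λ) is a polynomial in λ alone. -/
open MvPolynomial

/-- For `f = f(∂, λ) ∈ ℂ[∂, λ]` (variables `0 = ∂`, `1 = λ`), `subst a b f` is the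
polynomial `f(a, b) ∈ ℂ[∂, λ, μ]` obtained by substituting `a` for `∂` and `b` for `λ`. -/
noncomputable def subst (a b : MvPolynomial (Fin 3) ℂ) (f : MvPolynomial (Fin 2) ℂ) :
    MvPolynomial (Fin 3) ℂ :=
  aeval ![a, b] f

namespace MulIdentityAux

noncomputable abbrev R2 := MvPolynomial (Fin 2) ℂ

/-- The isolating map `ℂ[x₀,x₁,x₂] → (ℂ[x₀,x₁])[X]`, `x₂ ↦ X`. -/
noncomputable def Φ : MvPolynomial (Fin 3) ℂ →ₐ[ℂ] Polynomial R2 :=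
  aeval ![Polynomial.C (X 0), Polynomial.C (X 1), Polynomial.X]

lemma Φ_X0 : Φ (X 0) = Polynomial.C (X 0) := by simp [Φ]
lemma Φ_X1 : Φ (X 1) = Polynomial.C (X 1) := by simp [Φ]
lemma Φ_X2 : Φ (X 2) = Polynomial.X := by simp [Φ]

lemma Φ_subst (a b : MvPolynomial (Fin 3) ℂ) (f : MvPolynomial (Fin 2) ℂ) :
    Φ (subst a b f) = aeval ![Φ a, Φ b] f := by
  rw [subst, ← AlgHom.comp_apply, comp_aeval]
  have hfun : (fun i => Φ (![a, b] i)) = ![Φ a, Φ b] := by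
    funext i; fin_cases i <;> simp
  rw [hfun]

/-- Injectivity of one-variable substitutions possessing retractions. -/
lemma inj_aeval (u : R2) (π : R2 →ₐ[ℂ] MvPolynomial (Fin 1) ℂ) (hu : π u = X 0) :
    Function.Injective (aeval ![u] : MvPolynomial (Fin 1) ℂ →ₐ[ℂ] R2) := by
  have hcomp : π.comp (aeval ![u]) = AlgHom.id ℂ (MvPolynomial (Fin 1) ℂ) :=
    algHom_ext fun i => by fin_cases i; simp [hu]
  intro a b hab
  have h2 := congrArg π hab
  rwa [← AlgHom.comp_apply, ← AlgHom.comp_apply, hcomp, AlgHom.id_apply,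
    AlgHom.id_apply] at h2

/-- `f(u, X)` written through `finSuccEquiv`. -/
lemma eval_CuX (ι : MvPolynomial (Fin 1) ℂ →ₐ[ℂ] R2) (u : R2) (hu : ι (X 0) = u)
    (f : R2) :
    aeval ![Polynomial.C u, Polynomial.X] f
      = Polynomial.map (ι : MvPolynomial (Fin 1) ℂ →+* R2)
          (finSuccEquiv ℂ 1 (rename (Equiv.swap 0 1) f)) := by
  have key : (aeval ![Polynomial.C u, Polynomial.X] : R2 →ₐ[ℂ] Polynomial R2)
      = (Polynomial.mapAlgHom ι).comp
          ((finSuccEquiv ℂ 1).toAlgHom.comp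
            (rename (Equiv.swap (0 : Fin 2) 1) : R2 →ₐ[ℂ] R2)) := by
    refine algHom_ext fun i => ?_
    refine Fin.cases ?_ (fun j => ?_) i
    · have h1 : (Equiv.swap (0 : Fin 2) 1) 0 = Fin.succ 0 := Equiv.swap_apply_left 0 1
      simp only [AlgHom.comp_apply, AlgEquiv.toAlgHom_eq_coe, AlgHom.coe_coe, AlgEquiv.coe_algHom, rename_X, h1,
        finSuccEquiv_X_succ, Polynomial.coe_mapAlgHom, Polynomial.map_C, hu, aeval_X,
        Matrix.cons_val_zero]
      show Polynomial.C u = Polynomial.C (ι (X 0))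
      exact congrArg Polynomial.C hu.symm
    · rw [Subsingleton.elim j 0]
      have h1 : (Equiv.swap (0 : Fin 2) 1) (Fin.succ 0) = 0 := Equiv.swap_apply_right 0 1
      simp only [AlgHom.comp_apply, AlgEquiv.toAlgHom_eq_coe, AlgHom.coe_coe, AlgEquiv.coe_algHom, rename_X, h1,
        finSuccEquiv_X_zero, Polynomial.coe_mapAlgHom, Polynomial.map_X, aeval_X,
        Matrix.cons_val_succ, Matrix.cons_val_zero]
  rw [key]
  simp [Polynomial.coe_mapAlgHom]

/-- `f(X, u)` written through `finSuccEquiv`. -/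
lemma eval_XCu (ι : MvPolynomial (Fin 1) ℂ →ₐ[ℂ] R2) (u : R2) (hu : ι (X 0) = u)
    (f : R2) :
    aeval ![Polynomial.X, Polynomial.C u] f
      = Polynomial.map (ι : MvPolynomial (Fin 1) ℂ →+* R2) (finSuccEquiv ℂ 1 f) := by
  have key : (aeval ![Polynomial.X, Polynomial.C u] : R2 →ₐ[ℂ] Polynomial R2)
      = (Polynomial.mapAlgHom ι).comp (finSuccEquiv ℂ 1).toAlgHom := by
    refine algHom_ext fun i => ?_
    refine Fin.cases ?_ (fun j => ?_) i
    · simp only [AlgHom.comp_apply, AlgEquiv.toAlgHom_eq_coe, AlgHom.coe_coe, AlgEquiv.coe_algHom,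
        finSuccEquiv_X_zero, Polynomial.coe_mapAlgHom, Polynomial.map_X, aeval_X,
        Matrix.cons_val_zero]
    · rw [Subsingleton.elim j 0]
      simp only [AlgHom.comp_apply, AlgEquiv.toAlgHom_eq_coe, AlgHom.coe_coe, AlgEquiv.coe_algHom,
        finSuccEquiv_X_succ, Polynomial.coe_mapAlgHom, Polynomial.map_C, hu, aeval_X,
        Matrix.cons_val_succ, Matrix.cons_val_zero]
      show Polynomial.C u = Polynomial.C (ι (X 0))
      exact congrArg Polynomial.C hu.symm
  rw [key]
  simp [Polynomial.coe_mapAlgHom]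

end MulIdentityAux

open MulIdentityAux in
/-- If `g ∈ ℂ[∂, λ]` is nonzero and `g(∂+λ, μ)·g(∂, λ) = g(∂+μ, λ)·g(∂, μ)` holds in
`ℂ[∂, λ, μ]`, then `g` has degree `0` in `∂`, i.e. `g` is a polynomial in `λ` alone.
(Variables in `Fin 3`: `0 = ∂`, `1 = λ`, `2 = μ`.) -/
theorem degreeOf_fst_eq_zero_of_mul_identity (g : MvPolynomial (Fin 2) ℂ) (hg : g ≠ 0)
    (h : subst (X 0 + X 1) (X 2) g * subst (X 0) (X 1) g
        = subst (X 0 + X 2) (X 1) g * subst (X 0) (X 2) g) :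
    MvPolynomial.degreeOf 0 g = 0 := by
  classical
  -- retraction-based injectivity facts
  have hinj1 : Function.Injective (aeval ![X 0] : MvPolynomial (Fin 1) ℂ →ₐ[ℂ] R2) :=
    inj_aeval _ (aeval ![X 0, 0]) (by simp)
  have hinj2 : Function.Injective
      (aeval ![X 0 + X 1] : MvPolynomial (Fin 1) ℂ →ₐ[ℂ] R2) :=
    inj_aeval _ (aeval ![X 0, 0]) (by simp)
  have hinj3 : Function.Injective (aeval ![X 1] : MvPolynomial (Fin 1) ℂ →ₐ[ℂ] R2) :=
    inj_aeval _ (aeval ![0, X 0]) (by simp)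
  have hswapinj : Function.Injective ((Equiv.swap (0 : Fin 2) 1) : Fin 2 → Fin 2) :=
    Equiv.injective _
  have hren : rename ((Equiv.swap (0 : Fin 2) 1) : Fin 2 → Fin 2) g ≠ 0 := fun hz => by
    exact hg ((rename_injective _ hswapinj) (by simpa using hz))
  have hdeg_ren : degreeOf 0 (rename ((Equiv.swap (0 : Fin 2) 1) : Fin 2 → Fin 2) g)
      = degreeOf 1 g := by
    have := degreeOf_rename_of_injective (p := g) hswapinj (i := 1)
    rwa [Equiv.swap_apply_right] at this
  -- the four factors, moved into `(ℂ[x₀,x₁])[X]`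
  have h' := congrArg Φ h
  rw [map_mul, map_mul, Φ_subst, Φ_subst, Φ_subst, Φ_subst] at h'
  rw [map_add, map_add, Φ_X0, Φ_X1, Φ_X2] at h'
  -- A1 = g(∂+λ, X)
  set A1 := aeval ![Polynomial.C (X 0 : R2) + Polynomial.C (X 1 : R2), Polynomial.X] g with hA1
  set A2 := aeval ![Polynomial.C (X 0 : R2), Polynomial.C (X 1 : R2)] g with hA2
  set A3 := aeval ![Polynomial.C (X 0 : R2) + Polynomial.X, Polynomial.C (X 1 : R2)] g with hA3
  set A4 := aeval ![Polynomial.C (X 0 : R2), Polynomial.X] g with hA4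
  have hE : A1 * A2 = A3 * A4 := h'
  -- A1
  have hA1eq : A1 = Polynomial.map
      ((aeval ![(X 0 + X 1 : R2)] : MvPolynomial (Fin 1) ℂ →ₐ[ℂ] R2) : _ →+* R2)
      (finSuccEquiv ℂ 1 (rename (Equiv.swap 0 1) g)) := by
    rw [hA1, ← Polynomial.C_add]
    exact eval_CuX (aeval ![(X 0 + X 1 : R2)]) ((X 0 + X 1 : R2)) (by simp) g
  have hA1ne : A1 ≠ 0 := by
    rw [hA1eq]
    intro hz
    exact hren ((finSuccEquiv ℂ 1).injective
      (Polynomial.map_injective _ hinj2 (by simpa using hz)))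
  have hA1deg : A1.natDegree = degreeOf 1 g := by
    rw [hA1eq]
    exact (Polynomial.natDegree_map_eq_of_injective hinj2 _).trans
      (by rw [natDegree_finSuccEquiv, hdeg_ren])
  -- A4
  have hA4eq : A4 = Polynomial.map
      ((aeval ![(X 0 : R2)] : MvPolynomial (Fin 1) ℂ →ₐ[ℂ] R2) : _ →+* R2)
      (finSuccEquiv ℂ 1 (rename (Equiv.swap 0 1) g)) :=
    eval_CuX (aeval ![(X 0 : R2)]) ((X 0 : R2)) (by simp) g
  have hA4ne : A4 ≠ 0 := by
    rw [hA4eq]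
    intro hz
    exact hren ((finSuccEquiv ℂ 1).injective
      (Polynomial.map_injective _ hinj1 (by simpa using hz)))
  have hA4deg : A4.natDegree = degreeOf 1 g := by
    rw [hA4eq]
    exact (Polynomial.natDegree_map_eq_of_injective hinj1 _).trans
      (by rw [natDegree_finSuccEquiv, hdeg_ren])
  -- A2 = C g
  have hA2eq : A2 = Polynomial.C g := by
    have key : (aeval ![Polynomial.C (X 0 : R2), Polynomial.C (X 1 : R2)] :
        R2 →ₐ[ℂ] Polynomial R2) = (Polynomial.CAlgHom (R := ℂ)).comp (AlgHom.id ℂ R2) := by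
      refine algHom_ext fun i => ?_
      fin_cases i <;> simp [Polynomial.CAlgHom]
    rw [hA2]
    calc aeval ![Polynomial.C (X 0 : R2), Polynomial.C (X 1 : R2)] g
        = ((Polynomial.CAlgHom (R := ℂ)).comp (AlgHom.id ℂ R2)) g := by rw [key]
      _ = Polynomial.C g := rfl
  have hA2ne : A2 ≠ 0 := by
    rw [hA2eq]
    simpa using hg
  have hA2deg : A2.natDegree = 0 := by rw [hA2eq, Polynomial.natDegree_C]
  -- A3 = taylor (X 0) (g(X, λ))
  set p := aeval ![Polynomial.X, Polynomial.C (X 1 : R2)] g with hp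
  have hpeq : p = Polynomial.map
      ((aeval ![(X 1 : R2)] : MvPolynomial (Fin 1) ℂ →ₐ[ℂ] R2) : _ →+* R2)
      (finSuccEquiv ℂ 1 g) := eval_XCu (aeval ![(X 1 : R2)]) ((X 1 : R2)) (by simp) g
  have hpne : p ≠ 0 := by
    rw [hpeq]
    intro hz
    exact hg ((finSuccEquiv ℂ 1).injective
      (Polynomial.map_injective _ hinj3 (by simpa using hz)))
  have hpdeg : p.natDegree = degreeOf 0 g := by
    rw [hpeq]
    exact (Polynomial.natDegree_map_eq_of_injective hinj3 _).trans
      (by rw [natDegree_finSuccEquiv])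
  have hA3eq : A3 = Polynomial.taylor (X 0 : R2) p := by
    have key : ((Polynomial.aeval (Polynomial.X + Polynomial.C (X 0 : R2)) :
          Polynomial R2 →ₐ[R2] Polynomial R2).restrictScalars ℂ).comp
          (aeval ![Polynomial.X, Polynomial.C (X 1 : R2)] : R2 →ₐ[ℂ] Polynomial R2)
        = (aeval ![Polynomial.C (X 0) + Polynomial.X, Polynomial.C (X 1)] :
            R2 →ₐ[ℂ] Polynomial R2) := by
      refine algHom_ext fun i => ?_
      fin_cases i <;> simp [add_comm]
    rw [hA3, ← key]
    show Polynomial.aeval (Polynomial.X + Polynomial.C (X 0 : R2)) p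
        = Polynomial.taylor (X 0 : R2) p
    rw [Polynomial.taylor_apply, Polynomial.comp_eq_aeval]
  have hA3ne : A3 ≠ 0 := by
    rw [hA3eq]
    intro hz
    exact hpne (Polynomial.taylor_injective (X 0 : R2) (by simpa using hz))
  have hA3deg : A3.natDegree = degreeOf 0 g := by
    rw [hA3eq, Polynomial.natDegree_taylor, hpdeg]
  -- conclude by comparing degrees
  have hdeg := congrArg Polynomial.natDegree hE
  rw [Polynomial.natDegree_mul hA1ne hA2ne, Polynomial.natDegree_mul hA3ne hA4ne,
    hA1deg, hA2deg, hA3deg, hA4deg] at hdeg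
  omega
end

section
/- Let f, g ∈ ℂ[∂, λ] be polynomials, not both zero, satisfying the following three identities in ℂ[∂, λ, μ]: (i) f(∂+λ, μ)·f(∂, λ) − f(∂+μ, λ)·f(∂, μ) = (λ−μ)·(f(∂, λ+μ) + g(∂, λ+μ)); (ii) g(∂+λ, μ)·f(∂, λ) − f(∂+μ, λ)·g(∂, μ) = −μ·g(∂, λ+μ); (iii) g(∂+λ, μ)·g(∂, λ) = g(∂+μ, λ)·g(∂, μ). Then g = 0 and there exist α, Δ ∈ ℂ such that f(∂, λ) = ∂ + α + Δλ. -/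
open MvPolynomial

lemma map_subst {R' : Type*} [CommRing R'] [Algebra ℂ R']
    (φ : MvPolynomial (Fin 3) ℂ →ₐ[ℂ] R') (a b : MvPolynomial (Fin 3) ℂ)
    (p : MvPolynomial (Fin 2) ℂ) :
    φ (subst a b p) = aeval ![φ a, φ b] p := by
  rw [subst, ← AlgHom.comp_apply, MvPolynomial.comp_aeval]
  have h : (fun i => φ (![a, b] i)) = ![φ a, φ b] := by
    funext i; fin_cases i <;> simp
  rw [h]

lemma aeval_pair_id (p : MvPolynomial (Fin 2) ℂ) :
    aeval ![(X 0 : MvPolynomial (Fin 2) ℂ), X 1] p = p := by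
  have : ![(X 0 : MvPolynomial (Fin 2) ℂ), X 1] = X := by
    funext i; fin_cases i <;> simp
  rw [this, aeval_X_left_apply]

lemma g_eq_zero (f g : MvPolynomial (Fin 2) ℂ)
    (h1 : subst (X 0 + X 1) (X 2) f * subst (X 0) (X 1) f
        - subst (X 0 + X 2) (X 1) f * subst (X 0) (X 2) f
        = (X 1 - X 2) * (subst (X 0) (X 1 + X 2) f + subst (X 0) (X 1 + X 2) g))
    (h2 : subst (X 0 + X 1) (X 2) g * subst (X 0) (X 1) f
        - subst (X 0 + X 2) (X 1) f * subst (X 0) (X 2) g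
        = -(X 2) * subst (X 0) (X 1 + X 2) g) : g = 0 := by
  have hA := congrArg (aeval ![(X 0 : MvPolynomial (Fin 2) ℂ), X 1, 0]) h1
  have hB := congrArg (aeval ![(X 0 : MvPolynomial (Fin 2) ℂ), 0, X 1]) h2
  simp only [map_sub, map_mul, map_add, map_neg, map_subst, aeval_X,
    Matrix.cons_val_zero, Matrix.cons_val_one, Matrix.head_cons, Matrix.cons_val_two,
    Matrix.tail_cons, add_zero, zero_add, sub_zero, aeval_pair_id] at hA hB
  have key : X 1 * g * g = 0 := by linear_combination -g * hA - f * hB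
  rcases mul_eq_zero.mp key with h | h
  · rcases mul_eq_zero.mp h with h' | h'
    · exact absurd h' (MvPolynomial.X_ne_zero 1)
    · exact h'
  · exact h

-- P1 = ℂ[T], P2 = ℂ[T][S], P3 = ℂ[T][S][U]
noncomputable abbrev Phi : MvPolynomial (Fin 2) ℂ →ₐ[ℂ] Polynomial (Polynomial ℂ) :=
  aeval ![Polynomial.C Polynomial.X, Polynomial.X]
noncomputable abbrev Phit : MvPolynomial (Fin 2) ℂ →ₐ[ℂ] Polynomial (Polynomial ℂ) :=
  aeval ![Polynomial.X, Polynomial.C Polynomial.X]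

lemma Phi_inj : Function.Injective Phi := by
  have key : (Polynomial.eval₂RingHom
        (Polynomial.eval₂RingHom (MvPolynomial.C (σ := Fin 2) (R := ℂ)) (X 0))
        (X 1)).comp Phi.toRingHom = RingHom.id _ := by
    apply MvPolynomial.ringHom_ext
    · intro r; simp
    · intro i; fin_cases i <;> simp
  intro p q h
  have hp := RingHom.congr_fun key p
  have hq := RingHom.congr_fun key q
  simp only [RingHom.comp_apply, AlgHom.toRingHom_eq_coe, RingHom.coe_coe,
    RingHom.id_apply] at hp hq
  rw [← hp, ← hq, h]

lemma Phit_inj : Function.Injective Phit := by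
  have key : (Polynomial.eval₂RingHom
        (Polynomial.eval₂RingHom (MvPolynomial.C (σ := Fin 2) (R := ℂ)) (X 1))
        (X 0)).comp Phit.toRingHom = RingHom.id _ := by
    apply MvPolynomial.ringHom_ext
    · intro r; simp
    · intro i; fin_cases i <;> simp
  intro p q h
  have hp := RingHom.congr_fun key p
  have hq := RingHom.congr_fun key q
  simp only [RingHom.comp_apply, AlgHom.toRingHom_eq_coe, RingHom.coe_coe,
    RingHom.id_apply] at hp hq
  rw [← hp, ← hq, h]

notation "P3" => Polynomial (Polynomial (Polynomial ℂ))
noncomputable abbrev x3 : P3 := Polynomial.C (Polynomial.C Polynomial.X)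
noncomputable abbrev y3 : P3 := Polynomial.X
noncomputable abbrev z3 : P3 := Polynomial.C Polynomial.X

-- θ : ℂ[T] →+* ℂ[T][S],  T ↦ C T + S   (i.e. ∂ ↦ ∂ + μ)
noncomputable abbrev theta : Polynomial ℂ →+* Polynomial (Polynomial ℂ) :=
  Polynomial.eval₂RingHom ((Polynomial.C).comp (Polynomial.C))
    (Polynomial.C Polynomial.X + Polynomial.X)
-- κ : ℂ[T] →+* ℂ[T'][T],  T ↦ T (outer), scalars to constants
noncomputable abbrev kap : Polynomial ℂ →+* Polynomial (Polynomial ℂ) :=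
  Polynomial.mapRingHom Polynomial.C

lemma repr2 (p : MvPolynomial (Fin 2) ℂ) :
    aeval ![x3, y3] p = (Phi p).map Polynomial.C := by
  have key : (aeval ![x3, y3] : MvPolynomial (Fin 2) ℂ →ₐ[ℂ] P3).toRingHom
      = (Polynomial.mapRingHom (Polynomial.C)).comp Phi.toRingHom := by
    apply MvPolynomial.ringHom_ext
    · intro r; simp [Polynomial.algebraMap_apply]
    · intro i; fin_cases i <;> simp
  have := RingHom.congr_fun key p
  simpa using this

lemma repr4 (p : MvPolynomial (Fin 2) ℂ) :
    aeval ![x3, z3] p = Polynomial.C (Phi p) := by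
  have key : (aeval ![x3, z3] : MvPolynomial (Fin 2) ℂ →ₐ[ℂ] P3).toRingHom
      = (Polynomial.C).comp Phi.toRingHom := by
    apply MvPolynomial.ringHom_ext
    · intro r; simp [Polynomial.algebraMap_apply]
    · intro i; fin_cases i <;> simp
  have := RingHom.congr_fun key p
  simpa using this

lemma repr3 (p : MvPolynomial (Fin 2) ℂ) :
    aeval ![x3 + z3, y3] p = (Phi p).map theta := by
  have key : (aeval ![x3 + z3, y3] : MvPolynomial (Fin 2) ℂ →ₐ[ℂ] P3).toRingHom
      = (Polynomial.mapRingHom theta).comp Phi.toRingHom := by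
    apply MvPolynomial.ringHom_ext
    · intro r; simp [Polynomial.algebraMap_apply]
    · intro i; fin_cases i <;> simp
  have := RingHom.congr_fun key p
  simpa using this

lemma repr5 (p : MvPolynomial (Fin 2) ℂ) :
    aeval ![x3, y3 + z3] p
      = ((Phi p).map Polynomial.C).comp (Polynomial.X + Polynomial.C Polynomial.X) := by
  have key : (aeval ![x3, y3 + z3] : MvPolynomial (Fin 2) ℂ →ₐ[ℂ] P3).toRingHom
      = (Polynomial.eval₂RingHom (Polynomial.C) (Polynomial.X + Polynomial.C Polynomial.X)).comp
        ((Polynomial.mapRingHom (Polynomial.C)).comp Phi.toRingHom) := by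
    apply MvPolynomial.ringHom_ext
    · intro r; simp [Polynomial.algebraMap_apply]
    · intro i; fin_cases i <;> simp
  have := RingHom.congr_fun key p
  simpa [Polynomial.comp] using this

lemma repr1 (p : MvPolynomial (Fin 2) ℂ) :
    aeval ![x3 + y3, z3] p
      = ((Phit p).map kap).comp (Polynomial.X + Polynomial.C (Polynomial.C Polynomial.X)) := by
  have key : (aeval ![x3 + y3, z3] : MvPolynomial (Fin 2) ℂ →ₐ[ℂ] P3).toRingHom
      = (Polynomial.eval₂RingHom (Polynomial.C)
          (Polynomial.X + Polynomial.C (Polynomial.C Polynomial.X))).comp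
        ((Polynomial.mapRingHom kap).comp Phit.toRingHom) := by
    apply MvPolynomial.ringHom_ext
    · intro r; simp [Polynomial.algebraMap_apply]
    · intro i; fin_cases i <;> simp [add_comm]
  have := RingHom.congr_fun key p
  simpa [Polynomial.comp] using this

lemma theta_inj : Function.Injective theta := by
  have key : (Polynomial.evalRingHom (0 : Polynomial ℂ)).comp theta = RingHom.id _ := by
    apply Polynomial.ringHom_ext <;> simp
  intro p q h
  have hp := RingHom.congr_fun key p
  have hq := RingHom.congr_fun key q
  simp only [RingHom.comp_apply, RingHom.id_apply] at hp hq
  rw [← hp, ← hq, h]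

lemma kap_inj : Function.Injective kap := by
  intro p q h
  simp only [kap, Polynomial.coe_mapRingHom] at h
  exact Polynomial.map_injective _ Polynomial.C_injective h

lemma coeff_linear_mul (z : Polynomial (Polynomial ℂ)) (T : P3) (k : ℕ) :
    ((Polynomial.X - Polynomial.C z) * T).coeff (k + 1) = T.coeff k - z * T.coeff (k + 1) := by
  rw [sub_mul Polynomial.X (Polynomial.C z) T, Polynomial.coeff_sub, Polynomial.coeff_X_mul,
    Polynomial.coeff_C_mul]

lemma step2 (f : MvPolynomial (Fin 2) ℂ) (hf : f ≠ 0)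
    (hI : subst (X 0 + X 1) (X 2) f * subst (X 0) (X 1) f
        - subst (X 0 + X 2) (X 1) f * subst (X 0) (X 2) f
        = (X 1 - X 2) * subst (X 0) (X 1 + X 2) f) :
    ∃ b : Polynomial ℂ, f = X 0 + Polynomial.aeval (X 1) b := by
  have hF0 : Phi f ≠ 0 := by
    intro h; exact hf (Phi_inj (by simpa using h))
  have hFt0 : Phit f ≠ 0 := by
    intro h; exact hf (Phit_inj (by simpa using h))
  set F := Phi f with hF
  set Ft := Phit f with hFtdef
  set m := F.natDegree with hm
  set n := Ft.natDegree with hn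
  set c := F.leadingCoeff with hc
  set a := Ft.leadingCoeff with ha
  have hcne : c ≠ 0 := Polynomial.leadingCoeff_ne_zero.mpr hF0
  have hane : a ≠ 0 := Polynomial.leadingCoeff_ne_zero.mpr hFt0
  -- transfer the identity
  have hE := congrArg (aeval ![x3, y3, z3] : MvPolynomial (Fin 3) ℂ →ₐ[ℂ] P3) hI
  simp only [map_sub, map_mul, map_add] at hE
  rw [map_subst (aeval ![x3, y3, z3]) (X 0 + X 1) (X 2) f,
    map_subst (aeval ![x3, y3, z3]) (X 0) (X 1) f,
    map_subst (aeval ![x3, y3, z3]) (X 0 + X 2) (X 1) f,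
    map_subst (aeval ![x3, y3, z3]) (X 0) (X 2) f,
    map_subst (aeval ![x3, y3, z3]) (X 0) (X 1 + X 2) f] at hE
  simp only [map_add, aeval_X, Matrix.cons_val_zero, Matrix.cons_val_one, Matrix.head_cons,
    Matrix.cons_val_two, Matrix.tail_cons] at hE
  rw [repr1, repr2, repr3, repr4, repr5] at hE
  set q1 : P3 := Polynomial.X + Polynomial.C (Polynomial.C Polynomial.X) with hq1def
  set q5 : P3 := Polynomial.X + Polynomial.C Polynomial.X with hq5def
  set T1 : P3 := (Ft.map kap).comp q1 with hT1def
  set T2 : P3 := F.map Polynomial.C with hT2def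
  set T3 : P3 := F.map theta with hT3def
  set T4 : P3 := Polynomial.C F with hT4def
  set T5 : P3 := (F.map Polynomial.C).comp q5 with hT5def
  -- degree facts
  have dT1 : T1.natDegree = n := by
    rw [hT1def, Polynomial.natDegree_comp, hq1def, Polynomial.natDegree_X_add_C,
      Polynomial.natDegree_map_eq_of_injective kap_inj, mul_one]
  have lT1 : T1.leadingCoeff = kap a := by
    rw [hT1def, Polynomial.leadingCoeff_comp (by rw [hq1def, Polynomial.natDegree_X_add_C]; exact one_ne_zero),
      hq1def, Polynomial.leadingCoeff_X_add_C, one_pow, mul_one,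
      Polynomial.leadingCoeff_map_of_injective kap_inj]
  have dT2 : T2.natDegree = m := Polynomial.natDegree_map_eq_of_injective Polynomial.C_injective F
  have lT2 : T2.leadingCoeff = Polynomial.C c := Polynomial.leadingCoeff_map_of_injective Polynomial.C_injective F
  have dT3 : T3.natDegree = m := Polynomial.natDegree_map_eq_of_injective theta_inj F
  have dT4 : T4.natDegree = 0 := Polynomial.natDegree_C F
  have dT5 : T5.natDegree = m := by
    rw [hT5def, Polynomial.natDegree_comp, hq5def, Polynomial.natDegree_X_add_C,
      Polynomial.natDegree_map_eq_of_injective Polynomial.C_injective, mul_one]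
  have lT5 : T5.leadingCoeff = Polynomial.C c := by
    rw [hT5def, Polynomial.leadingCoeff_comp (by rw [hq5def, Polynomial.natDegree_X_add_C]; exact one_ne_zero),
      hq5def, Polynomial.leadingCoeff_X_add_C, one_pow, mul_one,
      Polynomial.leadingCoeff_map_of_injective Polynomial.C_injective]
  have d34 : (T3 * T4).natDegree ≤ m := by
    refine Polynomial.natDegree_mul_le.trans ?_
    rw [dT3, dT4]; omega
  -- coefficient of the top product
  have etop : (T1 * T2).coeff (n + m) = kap a * Polynomial.C c := by
    have := Polynomial.coeff_mul_degree_add_degree T1 T2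
    rwa [dT1, dT2, lT1, lT2] at this
  -- case analysis on n
  have hn1 : n = 1 := by
    by_contra hne
    rcases Nat.lt_or_ge n 2 with hlt | hge
    · -- n = 0
      interval_cases n
      · -- n = 0 : compare coeff at m + 1
        have h12 : (T1 * T2).natDegree ≤ m := by
          refine Polynomial.natDegree_mul_le.trans ?_
          rw [dT1, dT2]; omega
        have hL : ((T1 * T2) - (T3 * T4)).coeff (m + 1) = 0 := by
          rw [Polynomial.coeff_sub,
            Polynomial.coeff_eq_zero_of_natDegree_lt (lt_of_le_of_lt h12 (Nat.lt_succ_self m)),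
            Polynomial.coeff_eq_zero_of_natDegree_lt (lt_of_le_of_lt d34 (Nat.lt_succ_self m)),
            sub_zero]
        have hR : ((Polynomial.X - Polynomial.C (Polynomial.X : Polynomial (Polynomial ℂ))) * T5).coeff (m + 1)
            = Polynomial.C c := by
          rw [coeff_linear_mul, Polynomial.coeff_eq_zero_of_natDegree_lt (by omega : T5.natDegree < m + 1) ]
          · rw [mul_zero, sub_zero, ← dT5, Polynomial.coeff_natDegree, lT5]
        rw [hE] at hL
        rw [hL] at hR
        exact hcne (Polynomial.C_injective (by simpa using hR.symm))
      · exact hne rfl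
    · -- n ≥ 2 : compare coeff at n + m
      obtain ⟨k, hk⟩ : ∃ k, n = k + 2 := ⟨n - 2, by omega⟩
      have hL : ((T1 * T2) - (T3 * T4)).coeff (n + m) = kap a * Polynomial.C c := by
        rw [Polynomial.coeff_sub, etop,
          Polynomial.coeff_eq_zero_of_natDegree_lt (lt_of_le_of_lt d34 (by omega)), sub_zero]
      have hR : ((Polynomial.X - Polynomial.C (Polynomial.X : Polynomial (Polynomial ℂ))) * T5).coeff (n + m) = 0 := by
        have : n + m = (k + 1 + m) + 1 := by omega
        rw [this, coeff_linear_mul,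
          Polynomial.coeff_eq_zero_of_natDegree_lt (by omega : T5.natDegree < k + 1 + m),
          Polynomial.coeff_eq_zero_of_natDegree_lt (by omega : T5.natDegree < k + 1 + m + 1),
          mul_zero, sub_zero]
      rw [hE] at hL
      rw [hL] at hR
      rcases mul_eq_zero.mp hR with h | h
      · exact hane (by simpa [map_eq_zero_iff kap kap_inj] using h)
      · exact hcne (Polynomial.C_injective (by simpa using h))
  -- n = 1 : get leading coefficient 1
  have hA1 : a = 1 := by
    have hL : ((T1 * T2) - (T3 * T4)).coeff (m + 1) = kap a * Polynomial.C c := by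
      have h1m : m + 1 = n + m := by omega
      rw [Polynomial.coeff_sub, h1m, etop,
        Polynomial.coeff_eq_zero_of_natDegree_lt (lt_of_le_of_lt d34 (by omega)), sub_zero]
    have hR : ((Polynomial.X - Polynomial.C (Polynomial.X : Polynomial (Polynomial ℂ))) * T5).coeff (m + 1)
        = Polynomial.C c := by
      rw [coeff_linear_mul, Polynomial.coeff_eq_zero_of_natDegree_lt (by omega : T5.natDegree < m + 1)]
      rw [mul_zero, sub_zero, ← dT5, Polynomial.coeff_natDegree, lT5]
    rw [hE] at hL
    rw [hL] at hR
    have hzero : (kap a - 1) * Polynomial.C c = 0 := by linear_combination hR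
    rcases mul_eq_zero.mp hzero with h | h
    · have : kap a = kap 1 := by rw [map_one]; linear_combination h
      exact kap_inj this
    · exact absurd (Polynomial.C_injective (by simpa using h)) hcne
  -- Ft = X + C b
  have hMonic : Ft.Monic := by
    rw [Polynomial.Monic, ← ha, hA1]
  have hdeg1 : Ft.natDegree = 1 := by rw [← hn]; exact hn1
  have hXC : Ft = Polynomial.X + Polynomial.C (Ft.coeff 0) := hMonic.eq_X_add_C hdeg1
  refine ⟨Ft.coeff 0, ?_⟩
  apply Phit_inj
  have keyC : Polynomial.aeval (Polynomial.C Polynomial.X : Polynomial (Polynomial ℂ)) (Ft.coeff 0)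
      = Polynomial.C (Ft.coeff 0) := by
    have h2 := Polynomial.aeval_algHom_apply
      (Polynomial.CAlgHom (R := ℂ) (A := Polynomial ℂ)) Polynomial.X (Ft.coeff 0)
    simpa [Polynomial.aeval_X_left_apply] using h2
  have hsnd : Phit (Polynomial.aeval (X 1) (Ft.coeff 0)) = Polynomial.C (Ft.coeff 0) := by
    rw [← Polynomial.aeval_algHom_apply Phit (X 1) (Ft.coeff 0)]
    simpa using keyC
  rw [map_add, hsnd, ← hFtdef, hXC]
  simp

lemma coeff_lin_mul {R : Type*} [CommRing R] (z : R) (T : Polynomial R) (k : ℕ) :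
    ((Polynomial.X - Polynomial.C z) * T).coeff (k + 1) = T.coeff k - z * T.coeff (k + 1) := by
  rw [sub_mul Polynomial.X (Polynomial.C z) T, Polynomial.coeff_sub, Polynomial.coeff_X_mul,
    Polynomial.coeff_C_mul]

lemma step3 (f : MvPolynomial (Fin 2) ℂ) (b : Polynomial ℂ)
    (hfb : f = X 0 + Polynomial.aeval (X 1) b)
    (hI : subst (X 0 + X 1) (X 2) f * subst (X 0) (X 1) f
        - subst (X 0 + X 2) (X 1) f * subst (X 0) (X 2) f
        = (X 1 - X 2) * subst (X 0) (X 1 + X 2) f) :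
    ∃ α Δ : ℂ, f = X 0 + C α + C Δ * X 1 := by
  -- rewrite the substitutions
  have hsub : ∀ a c : MvPolynomial (Fin 3) ℂ, subst a c f = a + Polynomial.aeval c b := by
    intro a c
    rw [hfb, subst, map_add]
    congr 1
    · simp
    · rw [← Polynomial.aeval_algHom_apply (aeval ![a, c]) (X 1) b]
      simp
  rw [hsub, hsub, hsub, hsub, hsub] at hI
  have hJ : X 1 * Polynomial.aeval (X 1 : MvPolynomial (Fin 3) ℂ) b
        - X 2 * Polynomial.aeval (X 2 : MvPolynomial (Fin 3) ℂ) b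
      = (X 1 - X 2) * Polynomial.aeval (X 1 + X 2 : MvPolynomial (Fin 3) ℂ) b := by
    linear_combination hI
  -- specialize: λ ↦ X, μ ↦ 1
  have hK := congrArg (aeval ![0, Polynomial.X, 1] : MvPolynomial (Fin 3) ℂ →ₐ[ℂ] Polynomial ℂ) hJ
  have t1 : (aeval ![0, Polynomial.X, 1] : MvPolynomial (Fin 3) ℂ →ₐ[ℂ] Polynomial ℂ)
      (Polynomial.aeval (X 1) b) = b := by
    rw [← Polynomial.aeval_algHom_apply]
    simp [Polynomial.aeval_X_left_apply]
  have t2 : (aeval ![0, Polynomial.X, 1] : MvPolynomial (Fin 3) ℂ →ₐ[ℂ] Polynomial ℂ)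
      (Polynomial.aeval (X 2) b) = Polynomial.C (Polynomial.eval 1 b) := by
    rw [← Polynomial.aeval_algHom_apply]
    have h1 : (aeval ![0, Polynomial.X, 1] : MvPolynomial (Fin 3) ℂ →ₐ[ℂ] Polynomial ℂ) (X 2)
        = algebraMap ℂ (Polynomial ℂ) 1 := by simp
    rw [h1, Polynomial.aeval_algebraMap_apply_eq_algebraMap_eval, Polynomial.algebraMap_eq]
  have t3 : (aeval ![0, Polynomial.X, 1] : MvPolynomial (Fin 3) ℂ →ₐ[ℂ] Polynomial ℂ)
      (Polynomial.aeval (X 1 + X 2) b) = Polynomial.taylor 1 b := by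
    rw [← Polynomial.aeval_algHom_apply]
    have h1 : (aeval ![0, Polynomial.X, 1] : MvPolynomial (Fin 3) ℂ →ₐ[ℂ] Polynomial ℂ) (X 1 + X 2)
        = Polynomial.X + Polynomial.C 1 := by simp
    rw [h1, Polynomial.taylor_apply, Polynomial.comp_eq_aeval]
  simp only [map_sub, map_mul, aeval_X, Matrix.cons_val_zero, Matrix.cons_val_one,
    Matrix.head_cons, Matrix.cons_val_two, Matrix.tail_cons, t1, t2, t3] at hK
  -- hK : X * b - 1 * C (eval 1 b) = (X - 1) * taylor 1 b
  -- now show natDegree b ≤ 1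
  have hdb : b.natDegree ≤ 1 := by
    by_contra hgt
    push_neg at hgt
    obtain ⟨e, he⟩ : ∃ e, b.natDegree = e + 2 := ⟨b.natDegree - 2, by omega⟩
    have hbne : b ≠ 0 := fun h => by simp [h] at he
    have hHd : Polynomial.hasseDeriv (e + 2) b = Polynomial.C (b.coeff (e + 2)) := by
      apply Polynomial.ext; intro j
      rw [Polynomial.hasseDeriv_coeff, Polynomial.coeff_C]
      rcases j with _ | j
      · simp
      · have hz : b.coeff (j + 1 + (e + 2)) = 0 :=
          Polynomial.coeff_eq_zero_of_natDegree_lt (by omega)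
        simp [hz]
    have hHd1 : Polynomial.hasseDeriv (e + 1) b
        = Polynomial.C (b.coeff (e + 1))
          + Polynomial.C (((e : ℂ) + 2) * b.coeff (e + 2)) * Polynomial.X := by
      apply Polynomial.ext; intro j
      rw [Polynomial.hasseDeriv_coeff]
      rcases j with _ | j
      · simp
      · rcases j with _ | j
        · have h12 : 1 + (e + 1) = e + 2 := by omega
          have hch : (e + 2).choose (e + 1) = e + 2 := by
            rw [← Nat.choose_symm (by omega : e + 1 ≤ e + 2), (by omega : e + 2 - (e + 1) = 1),
              Nat.choose_one_right]
          rw [h12, hch]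
          push_cast
          simp [Polynomial.coeff_C]
        · have hz : b.coeff (j + 2 + (e + 1)) = 0 :=
            Polynomial.coeff_eq_zero_of_natDegree_lt (by omega)
          simp [hz, Polynomial.coeff_C, Polynomial.coeff_X]
    have hco := congrArg (fun p => Polynomial.coeff p (e + 2)) hK
    simp only [Polynomial.coeff_sub] at hco
    rw [Polynomial.coeff_X_mul] at hco
    have hc2 : (1 * Polynomial.C (Polynomial.eval 1 b)).coeff (e + 2) = 0 := by
      simp [Polynomial.coeff_C]
    rw [hc2, sub_zero] at hco
    rw [(by rw [Polynomial.C_1] : (Polynomial.X - 1 : Polynomial ℂ)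
        = Polynomial.X - Polynomial.C 1), coeff_lin_mul, Polynomial.taylor_coeff,
      Polynomial.taylor_coeff, hHd, hHd1] at hco
    simp only [Polynomial.eval_add, Polynomial.eval_mul, Polynomial.eval_C,
      Polynomial.eval_X, mul_one, one_mul] at hco
    have hkey : ((e : ℂ) + 1) * b.coeff (e + 2) = 0 := by linear_combination -hco
    rcases mul_eq_zero.mp hkey with h | h
    · exact Nat.cast_add_one_ne_zero e h
    · have : b.leadingCoeff ≠ 0 := Polynomial.leadingCoeff_ne_zero.mpr hbne
      exact this (by rwa [Polynomial.leadingCoeff, he])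
  refine ⟨b.coeff 0, b.coeff 1, ?_⟩
  have hb2 : Polynomial.aeval (X 1 : MvPolynomial (Fin 2) ℂ) b
      = C (b.coeff 1) * X 1 + C (b.coeff 0) := by
    conv_lhs => rw [Polynomial.eq_X_add_C_of_natDegree_le_one hdb]
    simp only [map_add, map_mul, Polynomial.aeval_C, Polynomial.aeval_X,
      MvPolynomial.algebraMap_eq]
  rw [hfb, hb2]
  ring

/-- If `f, g ∈ ℂ[∂, λ]` are not both zero and satisfy, in `ℂ[∂, λ, μ]`
(variables `0 = ∂`, `1 = λ`, `2 = μ`):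
(i)  `f(∂+λ,μ)·f(∂,λ) − f(∂+μ,λ)·f(∂,μ) = (λ−μ)·(f(∂,λ+μ) + g(∂,λ+μ))`,
(ii) `g(∂+λ,μ)·f(∂,λ) − f(∂+μ,λ)·g(∂,μ) = −μ·g(∂,λ+μ)`,
(iii) `g(∂+λ,μ)·g(∂,λ) = g(∂+μ,λ)·g(∂,μ)`,
then `g = 0` and `f(∂,λ) = ∂ + α + Δλ` for some `α, Δ ∈ ℂ`. -/
theorem rank_one_conformal_module_classification (f g : MvPolynomial (Fin 2) ℂ)
    (hfg : ¬(f = 0 ∧ g = 0))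
    (h1 : subst (X 0 + X 1) (X 2) f * subst (X 0) (X 1) f
        - subst (X 0 + X 2) (X 1) f * subst (X 0) (X 2) f
        = (X 1 - X 2) * (subst (X 0) (X 1 + X 2) f + subst (X 0) (X 1 + X 2) g))
    (h2 : subst (X 0 + X 1) (X 2) g * subst (X 0) (X 1) f
        - subst (X 0 + X 2) (X 1) f * subst (X 0) (X 2) g
        = -(X 2) * subst (X 0) (X 1 + X 2) g)
    (h3 : subst (X 0 + X 1) (X 2) g * subst (X 0) (X 1) g
        = subst (X 0 + X 2) (X 1) g * subst (X 0) (X 2) g) :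
    g = 0 ∧ ∃ α Δ : ℂ, f = X 0 + C α + C Δ * X 1 := by
  have hg : g = 0 := g_eq_zero f g h1 h2
  refine ⟨hg, ?_⟩
  have hf : f ≠ 0 := fun hf0 => hfg ⟨hf0, hg⟩
  rw [hg] at h1
  have hz : subst (X 0) (X 1 + X 2) (0 : MvPolynomial (Fin 2) ℂ) = 0 := by
    simp [subst]
  rw [hz, add_zero] at h1
  obtain ⟨b, hb⟩ := step2 f hf h1
  exact step3 f b hb h1
end

section
/- Fix α, Δ ∈ ℂ. For f ∈ ℂ[X] and j ≥ 0, let T_j(f) ∈ ℂ[X] denote the coefficient of λ^j when (X + α + Δλ)·f(X+λ) is expanded as a polynomial in λ with coefficients in ℂ[X]. Call an ideal I of ℂ[X] invariant if T_j(f) ∈ I for all f ∈ I and all j ≥ 0. If Δ ≠ 0, then the only invariant ideals of ℂ[X] are 0 and ℂ[X]. If Δ = 0, then the principal ideal generated by X + α is a nonzero proper invariant ideal. (This says the rank-1 conformal ℛ-module V(α, Δ) = ℂ[∂]v with L_λ v = (∂+α+Δλ)v, I_λ v = 0 is irreducible if and only if Δ ≠ 0.) -/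
open Polynomial

/-- For `f ∈ ℂ[X]`, `T α Δ j f` is the coefficient of `λ^j` in the expansion of
`(X + α + Δλ)·f(X + λ)` as a polynomial in `λ` over `ℂ[X]`. -/
noncomputable def T (α Δ : ℂ) (j : ℕ) (f : Polynomial ℂ) : Polynomial ℂ :=
  ((Polynomial.C (X + C α) + Polynomial.C (C Δ) * Polynomial.X) *
    Polynomial.aeval (Polynomial.C X + Polynomial.X : Polynomial (Polynomial ℂ)) f).coeff j

lemma aeval_eq (f : Polynomial ℂ) :
    Polynomial.aeval (Polynomial.C X + Polynomial.X : Polynomial (Polynomial ℂ)) f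
      = (f.map C).comp (Polynomial.C X + Polynomial.X) := by
  rw [Polynomial.comp, eval₂_map, aeval_def]; rfl

lemma g_natDegree (f : Polynomial ℂ) :
    ((f.map C).comp (Polynomial.C X + Polynomial.X)).natDegree = f.natDegree := by
  rw [natDegree_comp]
  have : (Polynomial.C X + Polynomial.X : Polynomial (Polynomial ℂ)).natDegree = 1 := by
    rw [add_comm]; exact natDegree_X_add_C _
  simp [this, natDegree_map]

lemma g_coeff_top (f : Polynomial ℂ) :
    ((f.map C).comp (Polynomial.C X + Polynomial.X)).coeff f.natDegree
      = Polynomial.C f.leadingCoeff := by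
  have h1 : (Polynomial.C X + Polynomial.X : Polynomial (Polynomial ℂ)).natDegree ≠ 0 := by
    rw [add_comm, natDegree_X_add_C]; exact one_ne_zero
  have := leadingCoeff_comp (p := f.map C) (q := Polynomial.C X + Polynomial.X) h1
  rw [leadingCoeff, g_natDegree] at this
  rw [this]
  have : (Polynomial.C X + Polynomial.X : Polynomial (Polynomial ℂ)).leadingCoeff = 1 := by
    rw [add_comm]; exact (monic_X_add_C _)
  rw [this, one_pow, mul_one, leadingCoeff, natDegree_map, coeff_map]
  rfl

lemma T_top (α Δ : ℂ) (f : Polynomial ℂ) :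
    T α Δ (f.natDegree + 1) f = Polynomial.C (Δ * f.leadingCoeff) := by
  rw [T, aeval_eq]
  set g := (f.map C).comp (Polynomial.C X + Polynomial.X) with hg
  have h1 : g.coeff (f.natDegree + 1) = 0 :=
    coeff_eq_zero_of_natDegree_lt (by rw [g_natDegree]; omega)
  rw [add_mul, coeff_add, mul_assoc, coeff_C_mul, coeff_C_mul, coeff_X_mul, h1,
    g_coeff_top f]
  rw [mul_zero, zero_add, map_mul]

/-- Call an ideal `I` of `ℂ[X]` invariant if `T α Δ j f ∈ I` for all `f ∈ I`, `j ≥ 0`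
(i.e. `I` is a conformal submodule of the rank-1 module `V(α, Δ)`).
If `Δ ≠ 0`, the only invariant ideals are `0` and `ℂ[X]`; if `Δ = 0`, the ideal
generated by `X + α` is a nonzero proper invariant ideal. Hence `V(α, Δ)` is
irreducible if and only if `Δ ≠ 0`. -/
theorem rank_one_module_irreducible_iff (α Δ : ℂ) :
    (Δ ≠ 0 → ∀ I : Ideal (Polynomial ℂ),
      (∀ f ∈ I, ∀ j : ℕ, T α Δ j f ∈ I) → I = ⊥ ∨ I = ⊤) ∧
    (Δ = 0 →
      (∀ f ∈ Ideal.span {(X + C α : Polynomial ℂ)}, ∀ j : ℕ,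
          T α Δ j f ∈ Ideal.span {(X + C α : Polynomial ℂ)}) ∧
        Ideal.span {(X + C α : Polynomial ℂ)} ≠ ⊥ ∧
        Ideal.span {(X + C α : Polynomial ℂ)} ≠ ⊤) := by
  constructor
  · intro hΔ I hI
    by_cases hbot : I = ⊥
    · exact Or.inl hbot
    · right
      obtain ⟨f, hfI, hf⟩ := Submodule.exists_mem_ne_zero_of_ne_bot hbot
      have hmem := hI f hfI (f.natDegree + 1)
      rw [T_top α Δ f] at hmem
      exact Ideal.eq_top_of_isUnit_mem _ hmem
        (isUnit_C.mpr (IsUnit.mk0 _ (mul_ne_zero hΔ (leadingCoeff_ne_zero.mpr hf))))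
  · intro hΔ
    refine ⟨?_, ?_, ?_⟩
    · intro f _ j
      rw [T, hΔ]
      simp only [map_zero, zero_mul, add_zero, coeff_C_mul]
      exact Ideal.mem_span_singleton.mpr (Dvd.intro _ rfl)
    · rw [Ne, Ideal.span_singleton_eq_bot]
      exact (monic_X_add_C α).ne_zero
    · rw [Ne, Ideal.span_singleton_eq_top]
      intro h
      exact (not_isUnit_of_natDegree_pos _ (by simp [natDegree_X_add_C])) h
end

section
/- Let 𝔤 be the Lie algebra over ℂ with basis {L_m, I_m : m ∈ ℤ} and brackets [L_m, L_n] = (m−n)(L_{m+n} + I_{m+n}), [L_m, I_n] = −(n+1) I_{m+n}, [I_m, I_n] = 0, and for n ≥ 0 let ℒ_n be the ℂ-span of {L_i, I_i : i ≥ n}. Then for every integer N ≥ 1, ℒ_N is a Lie ideal of ℒ₀ and the quotient Lie algebra ℒ₀/ℒ_N is finite-dimensional and solvable. -/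
/-- `ℒ_n`: the ℂ-span of `{L_i, I_i : i ≥ n}`. -/
noncomputable def filtL (n : ℕ) : Submodule ℂ NovikovLoop :=
  Submodule.span ℂ
    {v : NovikovLoop | ∃ (m : ℤ) (i : Fin 2), (n : ℤ) ≤ m ∧ v = Finsupp.single (m, i) (1 : ℂ)}

/-- The derived series of `ℒ₀`: `ℒ₀⁽⁰⁾ = ℒ₀` and `ℒ₀⁽ᵏ⁺¹⁾ = [ℒ₀⁽ᵏ⁾, ℒ₀⁽ᵏ⁾]`. -/
noncomputable def derivedL : ℕ → Submodule ℂ NovikovLoop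
  | 0 => filtL 0
  | k + 1 =>
      Submodule.span ℂ
        {v : NovikovLoop | ∃ x ∈ derivedL k, ∃ y ∈ derivedL k, v = novikovBracket x y}

/-! ### Auxiliary lemmas -/

lemma filtL_eq (n : ℕ) :
    filtL n = Finsupp.supported ℂ ℂ {p : ℤ × Fin 2 | (n : ℤ) ≤ p.1} := by
  rw [Finsupp.supported_eq_span_single, filtL]
  congr 1
  ext v
  constructor
  · rintro ⟨m, i, hm, rfl⟩
    exact ⟨(m, i), hm, rfl⟩
  · rintro ⟨⟨m, i⟩, hm, rfl⟩
    exact ⟨m, i, hm, rfl⟩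

lemma support_bracket {x y : NovikovLoop} {u : Set (ℤ × Fin 2)}
    (h : ∀ p ∈ x.support, ∀ q ∈ y.support,
      ↑(novikovBasisBracket p q).support ⊆ u) :
    ↑(novikovBracket x y).support ⊆ u := by
  intro k hk
  simp only [Finset.mem_coe, novikovBracket] at hk
  have h1 := Finsupp.support_sum hk
  rw [Finset.mem_biUnion] at h1
  obtain ⟨p, hp, hk2⟩ := h1
  have h2 := Finsupp.support_sum hk2
  rw [Finset.mem_biUnion] at h2
  obtain ⟨q, hq, hk3⟩ := h2
  exact h p hp q hq (Finsupp.support_smul hk3)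

lemma B_support_subset (p q : ℤ × Fin 2) :
    ↑(novikovBasisBracket p q).support ⊆
      {k : ℤ × Fin 2 | k.1 = p.1 + q.1 ∧ (k.2 = 1 ∨ (p.2 = 0 ∧ q.2 = 0))} := by
  unfold novikovBasisBracket
  split_ifs with h1 h2 h3
  · intro k hk
    have hk2 := Finsupp.support_add hk
    rw [Finset.mem_union] at hk2
    rcases hk2 with h | h
    · have := Finsupp.support_single_subset h
      simp only [Finset.mem_singleton] at this
      subst this
      exact ⟨rfl, Or.inr h1⟩
    · have := Finsupp.support_single_subset h
      simp only [Finset.mem_singleton] at this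
      subst this
      exact ⟨rfl, Or.inl rfl⟩
  · intro k hk
    have := Finsupp.support_single_subset hk
    simp only [Finset.mem_singleton] at this
    subst this
    exact ⟨rfl, Or.inl rfl⟩
  · intro k hk
    have := Finsupp.support_single_subset hk
    simp only [Finset.mem_singleton] at this
    subst this
    exact ⟨rfl, Or.inl rfl⟩
  · simp

lemma B_diag_zero {p q : ℤ × Fin 2} (hp : p.2 = 0) (hq : q.2 = 0)
    (hpq : p.1 = q.1) : novikovBasisBracket p q = 0 := by
  simp [novikovBasisBracket, hp, hq, hpq]

lemma B_II_zero {p q : ℤ × Fin 2} (hp : p.2 = 1) (hq : q.2 = 1) :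
    novikovBasisBracket p q = 0 := by
  simp [novikovBasisBracket, hp, hq]

/-- The index set for `filtL a ⊔ Ispan b`. -/
def uSet (a b : ℕ) : Set (ℤ × Fin 2) :=
  {p | (a : ℤ) ≤ p.1 ∨ ((b : ℤ) ≤ p.1 ∧ p.2 = 1)}

lemma B_key {a b : ℕ} (hba : b ≤ a) {p q : ℤ × Fin 2}
    (hp : p ∈ uSet a b) (hq : q ∈ uSet a b) :
    ↑(novikovBasisBracket p q).support ⊆ uSet (2 * a + 1) (a + b) := by
  have hp2 : p.2 = 0 ∨ p.2 = 1 := by omega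
  have hq2 : q.2 = 0 ∨ q.2 = 1 := by omega
  rcases hp2 with hp2 | hp2 <;> rcases hq2 with hq2 | hq2
  · -- both L-type
    have hpa : (a : ℤ) ≤ p.1 := by
      rcases hp with h | ⟨_, h⟩
      · exact h
      · rw [hp2] at h; exact absurd h (by decide)
    have hqa : (a : ℤ) ≤ q.1 := by
      rcases hq with h | ⟨_, h⟩
      · exact h
      · rw [hq2] at h; exact absurd h (by decide)
    by_cases hd : p.1 = q.1
    · rw [B_diag_zero hp2 hq2 hd]
      simp
    · intro k hk
      obtain ⟨hk1, -⟩ := B_support_subset p q hk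
      left
      show ((2 * a + 1 : ℕ) : ℤ) ≤ k.1
      push_cast
      omega
  · -- L, I
    have hpa : (a : ℤ) ≤ p.1 := by
      rcases hp with h | ⟨_, h⟩
      · exact h
      · rw [hp2] at h; exact absurd h (by decide)
    have hqb : (b : ℤ) ≤ q.1 := by
      rcases hq with h | ⟨h, _⟩
      · exact le_trans (by exact_mod_cast Int.ofNat_le.mpr hba) h
      · exact h
    intro k hk
    have hk' := B_support_subset p q hk
    obtain ⟨hk1, hk2⟩ := hk'
    rcases hk2 with hk2 | ⟨_, hq0⟩
    · right
      refine ⟨?_, hk2⟩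
      push_cast
      omega
    · rw [hq2] at hq0; exact absurd hq0 (by decide)
  · -- I, L
    have hpb : (b : ℤ) ≤ p.1 := by
      rcases hp with h | ⟨h, _⟩
      · exact le_trans (by exact_mod_cast Int.ofNat_le.mpr hba) h
      · exact h
    have hqa : (a : ℤ) ≤ q.1 := by
      rcases hq with h | ⟨_, h⟩
      · exact h
      · rw [hq2] at h; exact absurd h (by decide)
    intro k hk
    have hk' := B_support_subset p q hk
    obtain ⟨hk1, hk2⟩ := hk'
    rcases hk2 with hk2 | ⟨hp0, _⟩
    · right
      refine ⟨?_, hk2⟩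
      push_cast
      omega
    · rw [hp2] at hp0; exact absurd hp0 (by decide)
  · -- both I-type
    rw [B_II_zero hp2 hq2]
    simp

lemma fin_two_cases (i : Fin 2) : i = 0 ∨ i = 1 := by omega

def aSeq (k : ℕ) : ℕ := 2 ^ k - 1

noncomputable def bSeq : ℕ → ℕ
  | 0 => 0
  | k + 1 => aSeq k + bSeq k

lemma aSeq_succ (k : ℕ) : aSeq (k + 1) = 2 * aSeq k + 1 := by
  have h := Nat.one_le_two_pow (n := k)
  simp only [aSeq, pow_succ]
  omega

lemma bSeq_le_aSeq : ∀ k, bSeq k ≤ aSeq k := by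
  intro k
  induction k with
  | zero => simp [bSeq, aSeq]
  | succ k ih =>
    rw [aSeq_succ, bSeq]
    omega

lemma le_bSeq : ∀ k, k ≤ bSeq (k + 1) := by
  intro k
  induction k with
  | zero => simp
  | succ k ih =>
    have h1 : 1 ≤ aSeq (k + 1) := by
      have := Nat.one_le_two_pow (n := k)
      rw [aSeq_succ]; omega
    show k + 1 ≤ bSeq (k + 2)
    rw [show bSeq (k + 2) = aSeq (k + 1) + bSeq (k + 1) from rfl]
    omega

lemma derived_le (k : ℕ) :
    derivedL k ≤ Finsupp.supported ℂ ℂ (uSet (aSeq k) (bSeq k)) := by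
  induction k with
  | zero =>
    rw [show derivedL 0 = filtL 0 from rfl, filtL_eq]
    exact Finsupp.supported_mono (by intro p hp; exact Or.inl (by simpa [aSeq] using hp))
  | succ k ih =>
    rw [show derivedL (k + 1) = Submodule.span ℂ
        {v : NovikovLoop | ∃ x ∈ derivedL k, ∃ y ∈ derivedL k,
          v = novikovBracket x y} from rfl]
    apply Submodule.span_le.mpr
    rintro v ⟨x, hx, y, hy, rfl⟩
    rw [SetLike.mem_coe, Finsupp.mem_supported]
    have hxs : ↑x.support ⊆ uSet (aSeq k) (bSeq k) :=
      (Finsupp.mem_supported ℂ x).mp (ih hx)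
    have hys : ↑y.support ⊆ uSet (aSeq k) (bSeq k) :=
      (Finsupp.mem_supported ℂ y).mp (ih hy)
    apply support_bracket
    intro p hp q hq
    have := B_key (bSeq_le_aSeq k) (hxs hp) (hys hq)
    rw [aSeq_succ, show bSeq (k + 1) = aSeq k + bSeq k from rfl]
    exact this

/-- For every `N ≥ 1`, `ℒ_N` is a Lie ideal of `ℒ₀`, and the quotient `ℒ₀/ℒ_N` is a
finite-dimensional solvable Lie algebra (the quotient is realized as the image of `ℒ₀`
in `NovikovLoop ⧸ ℒ_N`, and solvability is expressed by the derived series of `ℒ₀`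
eventually landing in `ℒ_N`). -/
theorem filtL_quotient_finiteDimensional_solvable (N : ℕ) (hN : 1 ≤ N) :
    (∀ x ∈ filtL 0, ∀ y ∈ filtL N, novikovBracket x y ∈ filtL N) ∧
    FiniteDimensional ℂ ↥(Submodule.map (filtL N).mkQ (filtL 0)) ∧
    (∃ k : ℕ, derivedL k ≤ filtL N) := by
  refine ⟨?_, ?_, ?_⟩
  · -- ideal property
    intro x hx y hy
    rw [filtL_eq] at hx hy ⊢
    rw [Finsupp.mem_supported] at hx hy ⊢
    apply support_bracket
    intro p hp q hq
    intro k hk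
    obtain ⟨hk1, -⟩ := B_support_subset p q hk
    have hp' : (0 : ℤ) ≤ p.1 := by simpa using hx hp
    have hq' : (N : ℤ) ≤ q.1 := hy hq
    show (N : ℤ) ≤ k.1
    omega
  · -- finite dimensionality
    have hfin : FiniteDimensional ℂ
        ↥(Submodule.span ℂ (Set.range fun pr : Fin N × Fin 2 =>
          (filtL N).mkQ (Finsupp.single ((pr.1 : ℤ), pr.2) (1 : ℂ)))) :=
      FiniteDimensional.span_of_finite ℂ (Set.finite_range _)
    apply Submodule.finiteDimensional_of_le (S₂ := Submodule.span ℂ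
      (Set.range fun pr : Fin N × Fin 2 =>
        (filtL N).mkQ (Finsupp.single ((pr.1 : ℤ), pr.2) (1 : ℂ))))
    have h0 : filtL 0 = Submodule.span ℂ
        {v : NovikovLoop | ∃ (m : ℤ) (i : Fin 2),
          ((0 : ℕ) : ℤ) ≤ m ∧ v = Finsupp.single (m, i) (1 : ℂ)} := rfl
    rw [h0, Submodule.map_span]
    apply Submodule.span_le.mpr
    rintro v ⟨w, ⟨m, i, hm, rfl⟩, rfl⟩
    by_cases hmN : m < N
    · apply Submodule.subset_span
      have hm0 : (0 : ℤ) ≤ m := by simpa using hm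
      refine ⟨(⟨m.toNat, by omega⟩, i), ?_⟩
      have : ((m.toNat : ℤ)) = m := Int.toNat_of_nonneg hm0
      simp [this]
    · have hmem : Finsupp.single (m, i) (1 : ℂ) ∈ filtL N :=
        Submodule.subset_span ⟨m, i, by omega, rfl⟩
      have : (filtL N).mkQ (Finsupp.single (m, i) (1 : ℂ)) = 0 := by
        rw [Submodule.mkQ_apply, Submodule.Quotient.mk_eq_zero]
        exact hmem
      rw [this]
      exact Submodule.zero_mem _
  · -- solvability
    refine ⟨N + 1, ?_⟩
    have h1 := derived_le (N + 1)
    have hbN : N ≤ bSeq (N + 1) := le_bSeq N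
    have haN : bSeq (N + 1) ≤ aSeq (N + 1) := bSeq_le_aSeq (N + 1)
    refine le_trans h1 ?_
    rw [filtL_eq]
    apply Finsupp.supported_mono
    rintro p (h | ⟨h, _⟩) <;>
      · show (N : ℤ) ≤ p.1
        have : ((N : ℤ)) ≤ ((aSeq (N + 1) : ℤ)) ∧ ((N : ℤ)) ≤ ((bSeq (N + 1) : ℤ)) := by
          constructor <;> exact_mod_cast by omega
        omega
end

section
/- Let Δ ∈ ℂ with Δ ≠ 0, and let g ∈ ℂ[λ] satisfy the identity (μ + Δλ)·g(μ) = μ·g(λ+μ) in ℂ[λ, μ]. If Δ = 1, then g(λ) = a₁λ for some a₁ ∈ ℂ; if Δ ≠ 1, then g = 0. -/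
open MvPolynomial

/-- Let `Δ ≠ 0` and let `g ∈ ℂ[λ]` satisfy `(μ + Δλ)·g(μ) = μ·g(λ+μ)` in `ℂ[λ, μ]`
(variables: `0 = λ`, `1 = μ`). If `Δ = 1` then `g(λ) = a₁λ` for some `a₁ ∈ ℂ`; if
`Δ ≠ 1` then `g = 0`. -/
theorem g_functional_equation (Δ : ℂ) (hΔ : Δ ≠ 0) (g : Polynomial ℂ)
    (h : (X 1 + C Δ * X 0) * Polynomial.aeval (X 1 : MvPolynomial (Fin 2) ℂ) g
        = X 1 * Polynomial.aeval (X 0 + X 1 : MvPolynomial (Fin 2) ℂ) g) :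
    (Δ = 1 → ∃ a₁ : ℂ, g = Polynomial.C a₁ * Polynomial.X) ∧ (Δ ≠ 1 → g = 0) := by
  have hval : ∀ a b : ℂ, (b + Δ * a) * g.eval b = b * g.eval (a + b) := by
    intro a b
    have := congrArg (MvPolynomial.aeval ![a, b] : MvPolynomial (Fin 2) ℂ →ₐ[ℂ] ℂ) h
    simp only [map_mul, map_add, ← Polynomial.aeval_algHom_apply, aeval_X, map_ofNat,
      MvPolynomial.aeval_C, Matrix.cons_val_zero, Matrix.cons_val_one, Matrix.head_cons,
      Polynomial.coe_aeval_eq_eval] at this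
    simpa using this
  have hg : ∀ x : ℂ, g.eval x = g.eval 1 * (Δ * (x - 1) + 1) := by
    intro x
    have := hval (x - 1) 1
    rw [sub_add_cancel] at this
    linear_combination -this
  have key : Δ * (Δ - 1) * g.eval 1 = 0 := by
    have h12 := hval 1 2
    rw [hg 2, hg (1 + 2)] at h12
    linear_combination h12
  constructor
  · intro h1
    refine ⟨g.eval 1, Polynomial.funext fun x => ?_⟩
    simp [hg x, h1]
  · intro h1
    have hg1 : g.eval 1 = 0 := by
      rcases mul_eq_zero.mp key with h' | h'
      · rcases mul_eq_zero.mp h' with h'' | h''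
        · exact absurd h'' hΔ
        · exact absurd (sub_eq_zero.mp h'') h1
      · exact h'
    exact Polynomial.funext fun x => by simp [hg x, hg1]
end

section
/- Let Δ ∈ ℂ with Δ ≠ 0, and let f ∈ ℂ[λ] satisfy the identity (λ + Δμ)·f(λ) − (μ + Δλ)·f(μ) = (λ−μ)·f(λ+μ) in ℂ[λ, μ]. Then: if Δ ∉ {1, 2}, f(λ) = b₁λ for some b₁ ∈ ℂ; if Δ = 1, f(λ) = b₁λ + b₂λ² for some b₁, b₂ ∈ ℂ; if Δ = 2, f(λ) = b₁λ + b₃λ³ for some b₁, b₃ ∈ ℂ. Conversely all such polynomials are solutions. -/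
open MvPolynomial

/-- Let `Δ ≠ 0`. A polynomial `f ∈ ℂ[λ]` satisfies
`(λ + Δμ)·f(λ) − (μ + Δλ)·f(μ) = (λ−μ)·f(λ+μ)` in `ℂ[λ, μ]` (variables: `0 = λ`,
`1 = μ`) if and only if: `f(λ) = b₁λ` (which covers all solutions when `Δ ∉ {1, 2}`),
or `Δ = 1` and `f(λ) = b₁λ + b₂λ²`, or `Δ = 2` and `f(λ) = b₁λ + b₃λ³`. -/
theorem f_functional_equation (Δ : ℂ) (hΔ : Δ ≠ 0) (f : Polynomial ℂ) :
    ((X 0 + C Δ * X 1) * Polynomial.aeval (X 0 : MvPolynomial (Fin 2) ℂ) f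
        - (X 1 + C Δ * X 0) * Polynomial.aeval (X 1 : MvPolynomial (Fin 2) ℂ) f
        = (X 0 - X 1) * Polynomial.aeval (X 0 + X 1 : MvPolynomial (Fin 2) ℂ) f)
    ↔ ((Δ = 1 ∧ ∃ b₁ b₂ : ℂ, f = Polynomial.C b₁ * Polynomial.X
          + Polynomial.C b₂ * Polynomial.X ^ 2)
      ∨ (Δ = 2 ∧ ∃ b₁ b₃ : ℂ, f = Polynomial.C b₁ * Polynomial.X
          + Polynomial.C b₃ * Polynomial.X ^ 3)
      ∨ (∃ b₁ : ℂ, f = Polynomial.C b₁ * Polynomial.X)) := by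
  constructor
  · intro h
    -- Step 1: constant coefficient vanishes
    have ha0 : f.coeff 0 = 0 := by
      have h0 := congrArg (MvPolynomial.aeval (R := ℂ)
          (fun i : Fin 2 => if i = 0 then (0 : Polynomial ℂ) else Polynomial.X)) h
      simp only [map_sub, map_mul, map_add, ← Polynomial.aeval_algHom_apply,
        MvPolynomial.aeval_X, MvPolynomial.aeval_C] at h0
      norm_num [← Polynomial.coeff_zero_eq_aeval_zero'] at h0
      tauto
    -- Step 2: mapped identity in ℂ[μ][λ]
    have hψ := congrArg (MvPolynomial.aeval (R := ℂ)
        (fun i : Fin 2 => if i = 0 then (Polynomial.X : Polynomial (Polynomial ℂ))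
          else Polynomial.C Polynomial.X)) h
    simp only [map_sub, map_mul, map_add, ← Polynomial.aeval_algHom_apply,
      MvPolynomial.aeval_X, MvPolynomial.aeval_C] at hψ
    norm_num at hψ
    rw [show Polynomial.aeval (Polynomial.C Polynomial.X : Polynomial (Polynomial ℂ)) f
          = Polynomial.C f by
        rw [show (Polynomial.C Polynomial.X : Polynomial (Polynomial ℂ))
              = (Polynomial.CAlgHom (R := ℂ)) Polynomial.X from rfl,
          Polynomial.aeval_algHom_apply, Polynomial.aeval_X_left_apply]; rfl,
      show Polynomial.aeval
            (Polynomial.X + Polynomial.C Polynomial.X : Polynomial (Polynomial ℂ)) f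
          = Polynomial.taylor Polynomial.X (f.map Polynomial.C) by
        rw [Polynomial.taylor_apply, Polynomial.comp, Polynomial.eval₂_map,
          Polynomial.aeval_def]; rfl,
      show Polynomial.aeval (Polynomial.X : Polynomial (Polynomial ℂ)) f
          = f.map Polynomial.C from rfl] at hψ
    -- coefficient of λ¹
    have k1 := congrArg (fun p => Polynomial.coeff p 1) hψ
    simp only [Polynomial.coeff_sub, Polynomial.coeff_add, add_mul, sub_mul,
      Polynomial.coeff_X_mul, Polynomial.coeff_C_mul, mul_assoc, mul_comm Polynomial.X,
      Polynomial.taylor_coeff_one, Polynomial.taylor_coeff_zero, Polynomial.coeff_map,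
      Polynomial.coeff_mul_X, Polynomial.coeff_mul_C, ← Polynomial.C_mul,
      Polynomial.coeff_C, Polynomial.derivative_map, Polynomial.eval_map,
      Polynomial.eval₂_C_X] at k1
    norm_num [ha0] at k1
    -- k1 : C Δ * (C (f.coeff 1) * X) - C Δ * f = f - f.derivative * X
    -- coefficient of λ²
    have hdmap : Polynomial.hasseDeriv 2 (f.map Polynomial.C) =
        (Polynomial.hasseDeriv 2 f).map Polynomial.C := by
      ext n; simp [Polynomial.hasseDeriv_coeff]
    have k2 := congrArg (fun p => Polynomial.coeff p (1+1)) hψ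
    simp only [Polynomial.coeff_sub, Polynomial.coeff_add, add_mul, sub_mul,
      Polynomial.coeff_X_mul, Polynomial.coeff_C_mul, mul_assoc, mul_comm Polynomial.X,
      Polynomial.taylor_coeff_one, Polynomial.taylor_coeff, Polynomial.coeff_map,
      Polynomial.coeff_mul_X, Polynomial.coeff_mul_C, ← Polynomial.C_mul,
      Polynomial.coeff_C, Polynomial.derivative_map, hdmap, Polynomial.eval_map,
      Polynomial.eval₂_C_X] at k2
    norm_num at k2
    rw [Polynomial.eval_map, Polynomial.eval₂_C_X] at k2
    -- k2 : C (f.coeff 1) + C Δ * (C (f.coeff 2) * X) = f.derivative - hasseDeriv 2 f * X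
    -- generic coefficient relation from k1
    have krel : ∀ j : ℕ, ((j : ℂ) + 1 - Δ) * f.coeff (j + 2) = 0 := by
      intro j
      have kj := congrArg (fun p => Polynomial.coeff p (j + 1 + 1)) k1
      simp only [Polynomial.coeff_sub, Polynomial.coeff_add, Polynomial.coeff_C_mul,
        Polynomial.coeff_mul_X, Polynomial.coeff_X, Polynomial.coeff_derivative] at kj
      norm_num at kj
      push_cast at kj
      linear_combination kj
    -- all coefficients of degree ≥ 4 vanish
    have hm : ∀ j : ℕ, f.coeff (j + 4) = 0 := by
      intro j
      have kj := congrArg (fun p => Polynomial.coeff p (j + 2 + 1)) k2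
      simp only [Polynomial.coeff_sub, Polynomial.coeff_add, Polynomial.coeff_C_mul,
        Polynomial.coeff_mul_X, Polynomial.coeff_X, Polynomial.coeff_C,
        Polynomial.coeff_derivative, Polynomial.hasseDeriv_coeff] at kj
      norm_num at kj
      have hcc : ((j + 4).choose 2) * 2 = (j + 4) * (j + 3) := by
        have hdvd : 2 ∣ (j + 4) * (j + 3) := by
          rw [mul_comm]
          exact (Nat.even_mul_succ_self (j + 3)).two_dvd
        rw [Nat.choose_two_right, show j + 4 - 1 = j + 3 from rfl, Nat.div_mul_cancel hdvd]
      have hcC : ((j + 4).choose 2 : ℂ) * 2 = ((j : ℂ) + 4) * ((j : ℂ) + 3) := by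
        exact_mod_cast congrArg (fun n : ℕ => (n : ℂ)) hcc
      have key : ((j : ℂ) + 4) * ((j : ℂ) + 1) * f.coeff (j + 4) = 0 := by
        push_cast at kj
        linear_combination (2 : ℂ) * kj - f.coeff (j + 4) * hcC
      have h4 : ((j : ℂ) + 4) ≠ 0 := by
        have : ((j + 4 : ℕ) : ℂ) ≠ 0 := Nat.cast_ne_zero.2 (by omega)
        push_cast at this; exact this
      have h1 : ((j : ℂ) + 1) ≠ 0 := by
        have : ((j + 1 : ℕ) : ℂ) ≠ 0 := Nat.cast_ne_zero.2 (by omega)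
        push_cast at this; exact this
      rcases mul_eq_zero.1 key with h' | h'
      · exact absurd (mul_eq_zero.1 h') (by tauto)
      · exact h'
    have ha2 := krel 0
    have ha3 := krel 1
    norm_num at ha2 ha3
    -- classification
    by_cases hd1 : Δ = 1
    · left
      refine ⟨hd1, f.coeff 1, f.coeff 2, ?_⟩
      have ha3' : f.coeff 3 = 0 := ha3.resolve_left (by rw [hd1]; norm_num)
      ext n
      rcases n with _ | _ | _ | _ | n <;>
        simp [ha0, ha3', Polynomial.coeff_C_mul, Polynomial.coeff_X, Polynomial.coeff_X_pow]
      · exact hm n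
    · by_cases hd2 : Δ = 2
      · right; left
        refine ⟨hd2, f.coeff 1, f.coeff 3, ?_⟩
        have ha2' : f.coeff 2 = 0 := ha2.resolve_left (by rw [hd2]; norm_num)
        ext n
        rcases n with _ | _ | _ | _ | n <;>
          simp [ha0, ha2', Polynomial.coeff_C_mul, Polynomial.coeff_X, Polynomial.coeff_X_pow]
        · exact hm n
      · right; right
        refine ⟨f.coeff 1, ?_⟩
        have ha2' : f.coeff 2 = 0 :=
          ha2.resolve_left (fun hc => hd1 (by linear_combination -hc))
        have ha3' : f.coeff 3 = 0 :=
          ha3.resolve_left (fun hc => hd2 (by linear_combination -hc))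
        ext n
        rcases n with _ | _ | _ | _ | n <;>
          simp [ha0, ha2', ha3', Polynomial.coeff_C_mul, Polynomial.coeff_X]
        · exact hm n
  · rintro (⟨rfl, b₁, b₂, rfl⟩ | ⟨rfl, b₁, b₃, rfl⟩ | ⟨b₁, rfl⟩) <;>
    · simp only [map_add, map_mul, map_pow, Polynomial.aeval_X, Polynomial.aeval_C,
        map_one, map_ofNat]
      ring
end
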